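/- For every n ≥ 2 and every local behavior P in the scenario [(2 n),(2 2 … 2)], one has I_n(P) ≥ 0, where I_n(P) := P_A(1|1) + Σ_{k=1}^{n−1} P_B(1|k) − Σ_{k=1}^{n} P(11|1k) − Σ_{k=1}^{n−1} P(k1|2k) + Σ_{k=1}^{n−1} P(k1|2n). -/
import Mathlib


/-!
Bell scenario [(2 n),(2 2 … 2)]: party A has two measurements, measurement `1` with
outcomes `{1,2}` and measurement `2` with outcomes `{1,…,n}`; party B has `n`
measurements, each with outcomes `{1,2}`.  A behavior is given by a pair of families
`P1 : Fin n → Fin 2 → Fin 2 → ℝ` and `P2 : Fin n → Fin n → Fin 2 → ℝ`, where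
`P1 y a b = P(ab|1y)` and `P2 y a b = P(ab|2y)`.  The paper's label `k ∈ {1,…,n}`
(for measurements of B and for outcomes of A's second measurement) corresponds to the
index `k-1`, and the labels `1`,`2` correspond to the indices `0`,`1`.
-/

/-- The behavior `(P1, P2)` is a convex combination of deterministic behaviors
`P(ab|xy) = δ_{a,α_x} δ_{b,β_y}` with `α_1 : Fin 2`, `α_2 : Fin n`, `β : Fin n → Fin 2`. -/
def IsLocal2n {n : ℕ} (P1 : Fin n → Fin 2 → Fin 2 → ℝ)
    (P2 : Fin n → Fin n → Fin 2 → ℝ) : Prop :=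
  ∃ q : Fin 2 → Fin n → (Fin n → Fin 2) → ℝ,
    (∀ α₁ α₂ β, 0 ≤ q α₁ α₂ β) ∧
    (∑ α₁, ∑ α₂, ∑ β, q α₁ α₂ β) = 1 ∧
    (∀ (y : Fin n) (a b : Fin 2),
      P1 y a b = ∑ α₁, ∑ α₂, ∑ β,
        q α₁ α₂ β * (if α₁ = a then 1 else 0) * (if β y = b then 1 else 0)) ∧
    (∀ (y : Fin n) (a : Fin n) (b : Fin 2),
      P2 y a b = ∑ α₁, ∑ α₂, ∑ β,
        q α₁ α₂ β * (if α₂ = a then 1 else 0) * (if β y = b then 1 else 0))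

/-- The Bell expression
`I_n(P) = P_A(1|1) + Σ_{k=1}^{n−1} P_B(1|k) − Σ_{k=1}^{n} P(11|1k) − Σ_{k=1}^{n−1} P(k1|2k)
          + Σ_{k=1}^{n−1} P(k1|2n)`,
where the marginals are computed as `P_A(1|1) = Σ_b P(1b|1 1)` and
`P_B(1|k) = Σ_a P(a1|1k)` (well-defined choices for local behaviors). -/
noncomputable def BellIn (n : ℕ) (hn : 2 ≤ n) (P1 : Fin n → Fin 2 → Fin 2 → ℝ)
    (P2 : Fin n → Fin n → Fin 2 → ℝ) : ℝ :=
  (∑ b, P1 ⟨0, by omega⟩ 0 b)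
  + (∑ k : Fin (n - 1), ∑ a, P1 (Fin.castLE (Nat.sub_le n 1) k) a 0)
  - (∑ y : Fin n, P1 y 0 0)
  - (∑ k : Fin (n - 1),
      P2 (Fin.castLE (Nat.sub_le n 1) k) (Fin.castLE (Nat.sub_le n 1) k) 0)
  + (∑ k : Fin (n - 1), P2 ⟨n - 1, by omega⟩ (Fin.castLE (Nat.sub_le n 1) k) 0)


section auxproof


lemma swap3' {ι : Type*} [Fintype ι] {n : ℕ} (f : ι → Fin 2 → Fin n → (Fin n → Fin 2) → ℝ) :
    ∑ i, ∑ α₁, ∑ α₂, ∑ β, f i α₁ α₂ β = ∑ α₁, ∑ α₂, ∑ β, ∑ i, f i α₁ α₂ β := by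
  rw [Finset.sum_comm]
  refine Finset.sum_congr rfl fun α₁ _ => ?_
  rw [Finset.sum_comm]
  refine Finset.sum_congr rfl fun α₂ _ => ?_
  rw [Finset.sum_comm]

lemma merge5' {n : ℕ} (f g h k l : Fin 2 → Fin n → (Fin n → Fin 2) → ℝ) :
    ((∑ α₁, ∑ α₂, ∑ β, f α₁ α₂ β) + (∑ α₁, ∑ α₂, ∑ β, g α₁ α₂ β)
      - (∑ α₁, ∑ α₂, ∑ β, h α₁ α₂ β) - (∑ α₁, ∑ α₂, ∑ β, k α₁ α₂ β)
      + (∑ α₁, ∑ α₂, ∑ β, l α₁ α₂ β))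
    = ∑ α₁, ∑ α₂, ∑ β,
        (f α₁ α₂ β + g α₁ α₂ β - h α₁ α₂ β - k α₁ α₂ β + l α₁ α₂ β) := by
  simp only [← Finset.sum_add_distrib, ← Finset.sum_sub_distrib]

end auxproof

lemma bell_lin (n : ℕ) (hn : 2 ≤ n) (P1 : Fin n → Fin 2 → Fin 2 → ℝ)
    (P2 : Fin n → Fin n → Fin 2 → ℝ) (q : Fin 2 → Fin n → (Fin n → Fin 2) → ℝ)
    (h1 : ∀ (y : Fin n) (a b : Fin 2),
      P1 y a b = ∑ α₁, ∑ α₂, ∑ β,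
        q α₁ α₂ β * (if α₁ = a then 1 else 0) * (if β y = b then 1 else 0))
    (h2 : ∀ (y : Fin n) (a : Fin n) (b : Fin 2),
      P2 y a b = ∑ α₁, ∑ α₂, ∑ β,
        q α₁ α₂ β * (if α₂ = a then 1 else 0) * (if β y = b then 1 else 0)) :
    BellIn n hn P1 P2 = ∑ α₁, ∑ α₂, ∑ β, q α₁ α₂ β *
      BellIn n hn
        (fun y a b => (if α₁ = a then 1 else 0) * (if β y = b then 1 else 0))
        (fun y a b => (if α₂ = a then 1 else 0) * (if β y = b then 1 else 0)) := by
  have e1 : (∑ b, P1 ⟨0, by omega⟩ 0 b)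
      = ∑ α₁, ∑ α₂, ∑ β, q α₁ α₂ β *
          (∑ b, (if α₁ = (0 : Fin 2) then (1:ℝ) else 0) *
            (if β (⟨0, by omega⟩ : Fin n) = b then 1 else 0)) := by
    simp only [h1]
    rw [swap3']
    refine Finset.sum_congr rfl fun a1 _ => Finset.sum_congr rfl fun a2 _ =>
      Finset.sum_congr rfl fun b _ => ?_
    rw [Finset.mul_sum]
    exact Finset.sum_congr rfl fun i _ => by ring
  have e2 : (∑ k : Fin (n - 1), ∑ a, P1 (Fin.castLE (Nat.sub_le n 1) k) a 0)
      = ∑ α₁, ∑ α₂, ∑ β, q α₁ α₂ β *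
          (∑ k : Fin (n - 1), ∑ a : Fin 2, (if α₁ = a then (1:ℝ) else 0) *
            (if β (Fin.castLE (Nat.sub_le n 1) k) = (0 : Fin 2) then 1 else 0)) := by
    simp only [h1]
    rw [show (∑ k : Fin (n - 1), ∑ a : Fin 2, ∑ α₁, ∑ α₂, ∑ β,
        q α₁ α₂ β * (if α₁ = a then (1:ℝ) else 0) *
          (if β (Fin.castLE (Nat.sub_le n 1) k) = 0 then 1 else 0))
        = ∑ k : Fin (n - 1), ∑ α₁, ∑ α₂, ∑ β, ∑ a : Fin 2,
        q α₁ α₂ β * (if α₁ = a then (1:ℝ) else 0) *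
          (if β (Fin.castLE (Nat.sub_le n 1) k) = 0 then 1 else 0) from
      Finset.sum_congr rfl fun k _ => swap3' _]
    rw [swap3']
    refine Finset.sum_congr rfl fun a1 _ => Finset.sum_congr rfl fun a2 _ =>
      Finset.sum_congr rfl fun b _ => ?_
    rw [Finset.mul_sum]
    refine Finset.sum_congr rfl fun i _ => ?_
    rw [Finset.mul_sum]
    exact Finset.sum_congr rfl fun j _ => by ring
  have e3 : (∑ y : Fin n, P1 y 0 0)
      = ∑ α₁, ∑ α₂, ∑ β, q α₁ α₂ β *
          (∑ y : Fin n, (if α₁ = (0 : Fin 2) then (1:ℝ) else 0) *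
            (if β y = (0 : Fin 2) then 1 else 0)) := by
    simp only [h1]
    rw [swap3']
    refine Finset.sum_congr rfl fun a1 _ => Finset.sum_congr rfl fun a2 _ =>
      Finset.sum_congr rfl fun b _ => ?_
    rw [Finset.mul_sum]
    exact Finset.sum_congr rfl fun i _ => by ring
  have e4 : (∑ k : Fin (n - 1),
        P2 (Fin.castLE (Nat.sub_le n 1) k) (Fin.castLE (Nat.sub_le n 1) k) 0)
      = ∑ α₁, ∑ α₂, ∑ β, q α₁ α₂ β *
          (∑ k : Fin (n - 1), (if α₂ = Fin.castLE (Nat.sub_le n 1) k then (1:ℝ) else 0) *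
            (if β (Fin.castLE (Nat.sub_le n 1) k) = (0 : Fin 2) then 1 else 0)) := by
    simp only [h2]
    rw [swap3']
    refine Finset.sum_congr rfl fun a1 _ => Finset.sum_congr rfl fun a2 _ =>
      Finset.sum_congr rfl fun b _ => ?_
    rw [Finset.mul_sum]
    exact Finset.sum_congr rfl fun i _ => by ring
  have e5 : (∑ k : Fin (n - 1), P2 ⟨n - 1, by omega⟩ (Fin.castLE (Nat.sub_le n 1) k) 0)
      = ∑ α₁, ∑ α₂, ∑ β, q α₁ α₂ β *
          (∑ k : Fin (n - 1), (if α₂ = Fin.castLE (Nat.sub_le n 1) k then (1:ℝ) else 0) *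
            (if β (⟨n - 1, by omega⟩ : Fin n) = (0 : Fin 2) then 1 else 0)) := by
    simp only [h2]
    rw [swap3']
    refine Finset.sum_congr rfl fun a1 _ => Finset.sum_congr rfl fun a2 _ =>
      Finset.sum_congr rfl fun b _ => ?_
    rw [Finset.mul_sum]
    exact Finset.sum_congr rfl fun i _ => by ring
  rw [BellIn, e1, e2, e3, e4, e5, merge5']
  refine Finset.sum_congr rfl fun a1 _ => Finset.sum_congr rfl fun a2 _ =>
    Finset.sum_congr rfl fun b _ => ?_
  rw [BellIn]
  ring

lemma det_nonneg (n : ℕ) (hn : 2 ≤ n) (α₁ : Fin 2) (α₂ : Fin n) (β : Fin n → Fin 2) :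
    0 ≤ BellIn n hn
      (fun y a b => (if α₁ = a then 1 else 0) * (if β y = b then 1 else 0))
      (fun y a b => (if α₂ = a then 1 else 0) * (if β y = b then 1 else 0)) := by
  obtain ⟨m, rfl⟩ : ∃ m, n = m + 2 := ⟨n - 2, by omega⟩
  rw [BellIn]
  set c : Fin (m + 2 - 1) → Fin (m + 2) := Fin.castLE (Nat.sub_le (m + 2) 1) with hc
  set A1 : ℝ := if α₁ = 0 then 1 else 0 with hA1
  set L : ℝ := if β ⟨m + 2 - 1, by omega⟩ = 0 then 1 else 0 with hL
  set S : ℝ := ∑ k : Fin (m + 2 - 1), if β (c k) = 0 then 1 else 0 with hS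
  set R : ℝ := ∑ k : Fin (m + 2 - 1), if α₂ = c k then 1 else 0 with hR
  set D : ℝ := ∑ k : Fin (m + 2 - 1),
      (if α₂ = c k then (1:ℝ) else 0) * (if β (c k) = 0 then 1 else 0) with hD
  have t1 : (∑ b : Fin 2, (if α₁ = 0 then (1:ℝ) else 0) *
      (if β ⟨0, by omega⟩ = b then 1 else 0)) = A1 := by
    rw [← Finset.mul_sum, Finset.sum_ite_eq]
    simp [hA1]
  have t2 : (∑ k : Fin (m + 2 - 1), ∑ a : Fin 2, (if α₁ = a then (1:ℝ) else 0) *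
      (if β (c k) = 0 then 1 else 0)) = S := by
    rw [hS]
    refine Finset.sum_congr rfl fun k _ => ?_
    rw [← Finset.sum_mul, Finset.sum_ite_eq]
    simp
  have t3 : (∑ y : Fin (m + 2), A1 * (if β y = 0 then (1:ℝ) else 0)) = A1 * (S + L) := by
    rw [← Finset.mul_sum]
    congr 1
    rw [Fin.sum_univ_castSucc, hS, hL]
    rfl
  have t5 : (∑ k : Fin (m + 2 - 1), (if α₂ = c k then (1:ℝ) else 0) * L) = R * L := by
    exact (Finset.sum_mul _ _ _).symm
  have hDS : D ≤ S := by
    refine Finset.sum_le_sum fun k _ => ?_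
    split_ifs <;> norm_num
  have hDR : D ≤ R := by
    refine Finset.sum_le_sum fun k _ => ?_
    split_ifs <;> norm_num
  have hD0 : 0 ≤ D := by
    refine Finset.sum_nonneg fun k _ => ?_
    split_ifs <;> norm_num
  have hR0 : 0 ≤ R := by
    refine Finset.sum_nonneg fun k _ => ?_
    split_ifs <;> norm_num
  have hR1 : R ≤ 1 := by
    have hb : R = ((Finset.univ.filter fun k => α₂ = c k).card : ℝ) := by
      rw [hR, Finset.sum_boole]
    rw [hb]
    have hcard : (Finset.univ.filter fun k => α₂ = c k).card ≤ 1 := by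
      refine Finset.card_le_one.2 fun a ha b hb => ?_
      simp only [Finset.mem_filter] at ha hb
      exact Fin.castLE_injective _ (ha.2.symm.trans hb.2)
    exact_mod_cast hcard
  rw [t1, t2, t3, t5]
  have hA : A1 = 0 ∨ A1 = 1 := by rw [hA1]; split_ifs <;> simp
  have hLc : L = 0 ∨ L = 1 := by rw [hL]; split_ifs <;> simp
  rcases hA with h | h <;> rcases hLc with h' | h' <;> rw [h, h'] <;> nlinarith

/-- part (i) of Theorem 4 of the paper: every local behavior in the
scenario [(2 n),(2 2 … 2)] satisfies `I_n(P) ≥ 0`. -/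
theorem local_satisfies_In
    (n : ℕ) (hn : 2 ≤ n)
    (P1 : Fin n → Fin 2 → Fin 2 → ℝ) (P2 : Fin n → Fin n → Fin 2 → ℝ)
    (hloc : IsLocal2n P1 P2) :
    0 ≤ BellIn n hn P1 P2 := by
  obtain ⟨q, hq0, hq1, h1, h2⟩ := hloc
  rw [bell_lin n hn P1 P2 q h1 h2]
  exact Finset.sum_nonneg fun α₁ _ => Finset.sum_nonneg fun α₂ _ =>
    Finset.sum_nonneg fun β _ => mul_nonneg (hq0 _ _ _) (det_nonneg n hn α₁ α₂ β)
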